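/- (Safety of the unicycle under the transformation-based HOCBF constraint, where both controls appear.) Let r > 0 and r_b > 0. Along any solution of the unicycle model, suppose the initial conditions D(0) − (r + r_b) ≥ 0 and D'(0) + D(0) − (r + r_b) ≥ 0 hold, and suppose that for all t ≥ 0 the controls satisfy the transformed HOCBF constraint (P/(M·D))·u₂ + (d·Q/D)·u₁ + (v·(v + φ·Q) + d·φ·(d·φ − φ·P))/D − (v·P + d·φ·Q)²/D³ + 2·(v·P + d·φ·Q)/D + D − (r + r_b) ≥ 0 (all functions evaluated at t). Then D(t) ≥ r + r_b for all t ≥ 0; consequently, for every t ≥ 0, every point of the plane within distance r_b of the geometric center (X(t), Y(t)) lies at distance at least r from the obstacle center (x₀, y₀). -/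

import Mathlib

/-!
In the body frame of the robot the offset `(P, Q)` of the geometric center from the obstacle
obeys `P' = v + φ Q`, `Q' = d φ - φ P`, and `D = √(P² + Q²)`, so `D' = (v P + d φ Q) / D`.
Differentiating once more shows that the constraint is exactly `D'' + 2 D' + D - (r + r_b) ≥ 0`,
i.e. `ψ' + ψ ≥ 0` for `ψ = D' + D - (r + r_b)`. Since `eᵗ ψ` is then nondecreasing, `ψ ≥ 0`;
the same argument applied to `D - (r + r_b)` gives safety, and the triangle inequality gives
the statement about the robot's disc.
-/

open Real Set

theorem nonneg_of_deriv_add_mul_nonneg {f f' : ℝ → ℝ} {k a : ℝ}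
    (hf : ∀ t, HasDerivAt f (f' t) t) (ha : 0 ≤ f a)
    (h : ∀ t, a ≤ t → 0 ≤ f' t + k * f t) :
    ∀ t, a ≤ t → 0 ≤ f t := by
  have hg : ∀ t, HasDerivAt (fun s => exp (k * s) * f s)
      (exp (k * t) * (f' t + k * f t)) t := fun t =>
    ((((hasDerivAt_id t).const_mul k).exp).mul (hf t)).congr_deriv (by simp only [id]; ring)
  have hmono : MonotoneOn (fun s => exp (k * s) * f s) (Ici a) :=
    monotoneOn_of_hasDerivWithinAt_nonneg (convex_Ici a)
      (HasDerivAt.continuousOn fun t _ => hg t) (fun t _ => (hg t).hasDerivWithinAt)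
      fun t ht => mul_nonneg (exp_pos _).le (h t (interior_subset ht))
  intro t ht
  refine nonneg_of_mul_nonneg_right ?_ (exp_pos (k * t))
  calc 0 ≤ exp (k * a) * f a := mul_nonneg (exp_pos _).le ha
    _ ≤ exp (k * t) * f t := hmono self_mem_Ici ht ht

/-- The HOCBF condition of relative degree two with `α₁ s = k₁ s`, `α₂ s = k₂ s`: with
`ψ = b' + k₁ b`, the hypothesis `h` is `ψ' + k₂ ψ ≥ 0` written out. -/
theorem nonneg_of_second_order_barrier {b b' b'' : ℝ → ℝ} {k₁ k₂ a : ℝ}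
    (hb : ∀ t, HasDerivAt b (b' t) t) (hb' : ∀ t, HasDerivAt b' (b'' t) t)
    (h₀ : 0 ≤ b a) (h₁ : 0 ≤ b' a + k₁ * b a)
    (h : ∀ t, a ≤ t → 0 ≤ b'' t + (k₁ + k₂) * b' t + k₁ * k₂ * b t) :
    ∀ t, a ≤ t → 0 ≤ b t := by
  have hψ : ∀ t, a ≤ t → 0 ≤ b' t + k₁ * b t :=
    nonneg_of_deriv_add_mul_nonneg (k := k₂)
      (fun t => (hb' t).add ((hb t).const_mul k₁)) h₁ fun t ht => (h t ht).trans_eq (by ring)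
  exact nonneg_of_deriv_add_mul_nonneg hb h₀ hψ

theorem HasDerivAt.sqrt_sq_add_sq {p q : ℝ → ℝ} {p' q' t : ℝ} (hp : HasDerivAt p p' t)
    (hq : HasDerivAt q q' t) (h : p t ^ 2 + q t ^ 2 ≠ 0) :
    HasDerivAt (fun s => √(p s ^ 2 + q s ^ 2))
      ((p t * p' + q t * q') / √(p t ^ 2 + q t ^ 2)) t := by
  refine (((hp.pow 2).add (hq.pow 2)).sqrt h).congr_deriv ?_
  have : √(p t ^ 2 + q t ^ 2) ≠ 0 := sqrt_ne_zero'.mpr (lt_of_le_of_ne (by positivity) h.symm)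
  simp only [Pi.add_apply, Pi.pow_apply]
  field_simp
  ring

theorem sq_add_sq_rotate (a b θ : ℝ) :
    (a * cos θ + b * sin θ) ^ 2 + (-a * sin θ + b * cos θ) ^ 2 = a ^ 2 + b ^ 2 := by
  linear_combination (a ^ 2 + b ^ 2) * sin_sq_add_cos_sq θ

section BodyFrame

variable {a b θ : ℝ → ℝ} {v w ω t : ℝ}

theorem hasDerivAt_bodyFrame_fst (ha : HasDerivAt a (v * cos (θ t) - w * sin (θ t)) t)
    (hb : HasDerivAt b (v * sin (θ t) + w * cos (θ t)) t) (hθ : HasDerivAt θ ω t) :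
    HasDerivAt (fun s => a s * cos (θ s) + b s * sin (θ s))
      (v + ω * (-a t * sin (θ t) + b t * cos (θ t))) t :=
  ((ha.mul hθ.cos).add (hb.mul hθ.sin)).congr_deriv <| by
    linear_combination v * sin_sq_add_cos_sq (θ t)

theorem hasDerivAt_bodyFrame_snd (ha : HasDerivAt a (v * cos (θ t) - w * sin (θ t)) t)
    (hb : HasDerivAt b (v * sin (θ t) + w * cos (θ t)) t) (hθ : HasDerivAt θ ω t) :
    HasDerivAt (fun s => -a s * sin (θ s) + b s * cos (θ s))
      (w - ω * (a t * cos (θ t) + b t * sin (θ t))) t :=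
  ((ha.neg.mul hθ.sin).add (hb.mul hθ.cos)).congr_deriv <| by
    rw [Pi.neg_apply]
    linear_combination w * sin_sq_add_cos_sq (θ t)

end BodyFrame

theorem sqrt_sub_sq_add_sub_sq_le (a b c e p q : ℝ) :
    √((a - c) ^ 2 + (b - e) ^ 2) ≤ √((p - a) ^ 2 + (q - b) ^ 2) + √((p - c) ^ 2 + (q - e) ^ 2) := by
  simpa only [Complex.dist_eq_re_im] using
    dist_triangle_left (⟨a, b⟩ : ℂ) ⟨c, e⟩ ⟨p, q⟩

theorem unicycle_safety_transformed_hocbf_general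
    (r rb : ℝ)
    (M : ℝ)
    (x y v θ φ u₁ u₂ : ℝ → ℝ)
    (hx : Differentiable ℝ x) (hy : Differentiable ℝ y)
    (hv : Differentiable ℝ v) (hθ : Differentiable ℝ θ)
    (hφ : Differentiable ℝ φ)
    (hdx : ∀ t, deriv x t = v t * Real.cos (θ t))
    (hdy : ∀ t, deriv y t = v t * Real.sin (θ t))
    (hdv : ∀ t, deriv v t = u₂ t / M)
    (hdθ : ∀ t, deriv θ t = φ t)
    (hdφ : ∀ t, deriv φ t = u₁ t)
    (d : ℝ)
    (x₀ y₀ : ℝ) (X Y D P Q : ℝ → ℝ)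
    (hX : ∀ t, X t = x t + d * Real.cos (θ t))
    (hY : ∀ t, Y t = y t + d * Real.sin (θ t))
    (hD : ∀ t, D t = Real.sqrt ((X t - x₀) ^ 2 + (Y t - y₀) ^ 2))
    (hP : ∀ t, P t = (X t - x₀) * Real.cos (θ t) + (Y t - y₀) * Real.sin (θ t))
    (hQ : ∀ t, Q t = -(X t - x₀) * Real.sin (θ t) + (Y t - y₀) * Real.cos (θ t))
    (hDpos : ∀ t, 0 < D t)
    (hinit0 : D 0 - (r + rb) ≥ 0)
    (hinit1 : deriv D 0 + D 0 - (r + rb) ≥ 0)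
    (hconstr : ∀ t : ℝ, 0 ≤ t →
      (P t / (M * D t)) * u₂ t + (d * Q t / D t) * u₁ t
        + (v t * (v t + φ t * Q t)
            + d * φ t * (d * φ t - φ t * P t)) / D t
        - (v t * P t + d * φ t * Q t) ^ 2 / (D t) ^ 3
        + 2 * ((v t * P t + d * φ t * Q t) / D t)
        + D t - (r + rb) ≥ 0) :
    (∀ t : ℝ, 0 ≤ t → D t ≥ r + rb) ∧
      ∀ t : ℝ, 0 ≤ t → ∀ px py : ℝ,
        Real.sqrt ((px - X t) ^ 2 + (py - Y t) ^ 2) ≤ rb →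
        Real.sqrt ((px - x₀) ^ 2 + (py - y₀) ^ 2) ≥ r := by
  have hv' t : HasDerivAt v (u₂ t / M) t := hdv t ▸ (hv t).hasDerivAt
  have hθ' t : HasDerivAt θ (φ t) t := hdθ t ▸ (hθ t).hasDerivAt
  have hφ' t : HasDerivAt φ (u₁ t) t := hdφ t ▸ (hφ t).hasDerivAt
  have hX' t : HasDerivAt X (v t * cos (θ t) - d * φ t * sin (θ t)) t := by
    rw [funext hX]
    exact ((hdx t ▸ (hx t).hasDerivAt).add ((hθ' t).cos.const_mul d)).congr_deriv (by ring)
  have hY' t : HasDerivAt Y (v t * sin (θ t) + d * φ t * cos (θ t)) t := by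
    rw [funext hY]
    exact ((hdy t ▸ (hy t).hasDerivAt).add ((hθ' t).sin.const_mul d)).congr_deriv (by ring)
  have hP' t : HasDerivAt P (v t + φ t * Q t) t := by
    rw [funext hP, hQ t]
    exact hasDerivAt_bodyFrame_fst ((hX' t).sub_const x₀) ((hY' t).sub_const y₀) (hθ' t)
  have hQ' t : HasDerivAt Q (d * φ t - φ t * P t) t := by
    rw [funext hQ, hP t]
    exact hasDerivAt_bodyFrame_snd ((hX' t).sub_const x₀) ((hY' t).sub_const y₀) (hθ' t)
  have hD_eq t : D t = √(P t ^ 2 + Q t ^ 2) := by rw [hD, hP, hQ, sq_add_sq_rotate]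
  have hD' t : HasDerivAt D ((v t * P t + d * φ t * Q t) / D t) t := by
    have hpos : 0 < P t ^ 2 + Q t ^ 2 := sqrt_pos.mp (hD_eq t ▸ hDpos t)
    rw [funext hD_eq]
    exact ((hP' t).sqrt_sq_add_sq (hQ' t) hpos.ne').congr_deriv (by ring)
  have hD'' t := (((hv' t).mul (hP' t)).add (((hφ' t).const_mul d).mul (hQ' t))).div (hD' t)
    (hDpos t).ne'
  have hsafe : ∀ t, 0 ≤ t → 0 ≤ D t - (r + rb) :=
    nonneg_of_second_order_barrier (k₁ := 1) (k₂ := 1) (fun t => (hD' t).sub_const (r + rb))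
      hD'' hinit0 (by rw [(hD' 0).deriv] at hinit1; linarith) fun t ht => by
        have := (hDpos t).ne'
        refine (hconstr t ht).trans_eq ?_
        simp only [Pi.add_apply, Pi.mul_apply]
        field_simp
        ring
  refine ⟨fun t ht => sub_nonneg.mp (hsafe t ht), fun t ht px py hp => ?_⟩
  linarith [hsafe t ht, hD t, sqrt_sub_sq_add_sub_sq_le (X t) (Y t) x₀ y₀ px py]

/-- Safety of the unicycle under the transformation-based HOCBF constraint,
where both controls appear: `D t ≥ r + r_b` for all `t ≥ 0`, and hence every
point within distance `r_b` of the geometric center stays at distance at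
least `r` from the obstacle center. -/
theorem unicycle_safety_transformed_hocbf
    (r rb : ℝ) (hr : 0 < r) (hrb : 0 < rb)
    (M : ℝ) (hM : 0 < M)
    (x y v θ φ u₁ u₂ : ℝ → ℝ)
    (hx : Differentiable ℝ x) (hy : Differentiable ℝ y)
    (hv : Differentiable ℝ v) (hθ : Differentiable ℝ θ)
    (hφ : Differentiable ℝ φ)
    (hu₁ : Continuous u₁) (hu₂ : Continuous u₂)
    (hdx : ∀ t, deriv x t = v t * Real.cos (θ t))
    (hdy : ∀ t, deriv y t = v t * Real.sin (θ t))
    (hdv : ∀ t, deriv v t = u₂ t / M)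
    (hdθ : ∀ t, deriv θ t = φ t)
    (hdφ : ∀ t, deriv φ t = u₁ t)
    (d : ℝ) (hd : 0 < d)
    (x₀ y₀ : ℝ) (X Y D P Q : ℝ → ℝ)
    (hX : ∀ t, X t = x t + d * Real.cos (θ t))
    (hY : ∀ t, Y t = y t + d * Real.sin (θ t))
    (hD : ∀ t, D t = Real.sqrt ((X t - x₀) ^ 2 + (Y t - y₀) ^ 2))
    (hP : ∀ t, P t = (X t - x₀) * Real.cos (θ t) + (Y t - y₀) * Real.sin (θ t))
    (hQ : ∀ t, Q t = -(X t - x₀) * Real.sin (θ t) + (Y t - y₀) * Real.cos (θ t))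
    (hDpos : ∀ t, 0 < D t)
    (hinit0 : D 0 - (r + rb) ≥ 0)
    (hinit1 : deriv D 0 + D 0 - (r + rb) ≥ 0)
    (hconstr : ∀ t : ℝ, 0 ≤ t →
      (P t / (M * D t)) * u₂ t + (d * Q t / D t) * u₁ t
        + (v t * (v t + φ t * Q t)
            + d * φ t * (d * φ t - φ t * P t)) / D t
        - (v t * P t + d * φ t * Q t) ^ 2 / (D t) ^ 3
        + 2 * ((v t * P t + d * φ t * Q t) / D t)
        + D t - (r + rb) ≥ 0) :
    (∀ t : ℝ, 0 ≤ t → D t ≥ r + rb) ∧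
      ∀ t : ℝ, 0 ≤ t → ∀ px py : ℝ,
        Real.sqrt ((px - X t) ^ 2 + (py - Y t) ^ 2) ≤ rb →
        Real.sqrt ((px - x₀) ^ 2 + (py - y₀) ^ 2) ≥ r :=
  unicycle_safety_transformed_hocbf_general r rb M x y v θ φ u₁ u₂ hx hy hv hθ hφ hdx hdy hdv hdθ
    hdφ d x₀ y₀ X Y D P Q hX hY hD hP hQ hDpos hinit0 hinit1 hconstr
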